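/- Let N ≥ m > 1 and let f : ℝ → ℝ be continuous. Let γ⁻ ∈ ℝ, β̄ > 0 with −β̄ > γ⁻, and L₀ > 0 be such that −f(s) ≤ L₀·(s − γ⁻)^(m−1) for all s ∈ (γ⁻, −β̄]. Let u be a solution of the radial equation on [T, s*] with 0 < T < s*, u'(T) = 0, u'(r) ≥ 0 for all r ∈ [T, s*], and u(r) ∈ (γ⁻, −β̄] for all r ∈ [T, s*]. Then, with C = (L₀/N)^(1/(m−1)), for every r ∈ [T, s*] one has 0 ≤ u'(r) ≤ C·(s*)^(1/(m−1))·(u(T) − γ⁻)·exp( C·(s*)^(m/(m−1)) ). -/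

import Mathlib

/-!
Multiplying the equation by `r^(N-1)` puts it in divergence form
`(r^(N-1) φ_m(u'))' = -r^(N-1) f(u)`, and the growth bound on `-f` makes
`r ↦ (L₀/N) (u - γ⁻)^(m-1) r^N` a supersolution of this flux equation as long as `u' ≥ 0`.
Since the flux vanishes at `T`, comparison gives `u'^(m-1) ≤ (L₀/N) r (u - γ⁻)^(m-1)`,
i.e. `u' ≤ C (s*)^(1/(m-1)) (u - γ⁻)`, and Grönwall's inequality bounds `u - γ⁻`
by `(u(T) - γ⁻) exp(C (s*)^(1/(m-1)) (r - T))`.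
-/

open Set Filter MeasureTheory

noncomputable def phim (m x : ℝ) : ℝ := |x| ^ (m - 2) * x

noncomputable def Fint (f : ℝ → ℝ) (s : ℝ) : ℝ := ∫ t in (0:ℝ)..s, f t

noncomputable def Qfun (N m : ℝ) (f : ℝ → ℝ) (s : ℝ) : ℝ :=
  m * N * Fint f s - (N - m) * s * f s

/-- `u` (with derivative function `u'`) is a solution of the radial quasilinear
equation on the set `J`. -/
def IsSolutionOn (N m : ℝ) (f : ℝ → ℝ) (J : Set ℝ) (u u' : ℝ → ℝ) : Prop :=
  (∀ r ∈ J, HasDerivWithinAt u (u' r) J r) ∧ ContinuousOn u' J ∧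
    ∃ w' : ℝ → ℝ,
      (∀ r ∈ J ∩ Set.Ioi (0:ℝ),
        HasDerivWithinAt (fun t => phim m (u' t)) (w' r) (J ∩ Set.Ioi (0:ℝ)) r) ∧
      ContinuousOn w' (J ∩ Set.Ioi (0:ℝ)) ∧
      ∀ r ∈ J ∩ Set.Ioi (0:ℝ), w' r + ((N - 1) / r) * phim m (u' r) + f (u r) = 0

def IsIVPSolutionOn (N m : ℝ) (f : ℝ → ℝ) (α : ℝ) (J : Set ℝ) (u u' : ℝ → ℝ) : Prop :=
  IsSolutionOn N m f J u u' ∧ u 0 = α ∧ u' 0 = 0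

/-- Admissible domains for the IVP: `[0,∞)` or `[0,R)` with `0 < R`. -/
def IVPDomain (J : Set ℝ) : Prop :=
  J = Set.Ici (0:ℝ) ∨ ∃ R : ℝ, 0 < R ∧ J = Set.Ico (0:ℝ) R

/-- The solution `u` of the IVP on `J` cannot be extended to a solution on a
strictly larger admissible domain. -/
def Noncontinuable (N m : ℝ) (f : ℝ → ℝ) (α : ℝ) (J : Set ℝ) (u u' : ℝ → ℝ) : Prop :=
  ∀ J' : Set ℝ, IVPDomain J' → J ⊂ J' →
    ¬ ∃ v v' : ℝ → ℝ, IsIVPSolutionOn N m f α J' v v' ∧ Set.EqOn v u J ∧ Set.EqOn v' u' J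

open Classical in
/-- The filter describing the approach to the right endpoint of an IVP domain. -/
noncomputable def domEnd (J : Set ℝ) : Filter ℝ :=
  if J = Set.Ici (0:ℝ) then Filter.atTop else nhdsWithin (sSup J) (Set.Iio (sSup J))

def LocLipschitzOn (f : ℝ → ℝ) (S : Set ℝ) : Prop :=
  ∀ x ∈ S, ∃ ε : ℝ, 0 < ε ∧ ∃ K : NNReal, LipschitzOnWith K f (Metric.ball x ε ∩ S)

/-- Assumption (f₂). -/
structure Hf2 (f : ℝ → ℝ) (βm βp : ℝ) (γm γp : EReal) : Prop where
  hβm : βm < 0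
  hβp : 0 < βp
  hFneg : ∀ s : ℝ, s ∈ Set.Ioo βm βp → s ≠ 0 → Fint f s < 0
  hFβm : Fint f βm = 0
  hFβp : Fint f βp = 0
  hγp : (βp : EReal) < γp
  hγm : γm < (βm : EReal)
  hfpos : ∀ s : ℝ, βp < s → (s : EReal) < γp → 0 < f s
  hfneg : ∀ s : ℝ, γm < (s : EReal) → s < βm → f s < 0
  hγpzero : ∀ s : ℝ, (s : EReal) = γp → f s = 0
  hγmzero : ∀ s : ℝ, (s : EReal) = γm → f s = 0
  hlim : ∃ L : EReal,
    Filter.Tendsto (fun s : ℝ => (Fint f s : EReal))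
      (Filter.comap Real.toEReal (nhdsWithin γp (Set.Iio γp))) (nhds L) ∧
    Filter.Tendsto (fun s : ℝ => (Fint f s : EReal))
      (Filter.comap Real.toEReal (nhdsWithin γm (Set.Ioi γm))) (nhds L)
  hlip : LocLipschitzOn f {s : ℝ | (γm < (s : EReal) ∧ s < 0) ∨ (0 < s ∧ (s : EReal) < γp)}

/-- Assumption (f₃). -/
def Hf3 (N m : ℝ) (f : ℝ → ℝ) (βm βp : ℝ) (γm γp : EReal) : Prop :=
  (γp = ⊤ →
    (∃ βb : ℝ, βp < βb ∧ ∀ s : ℝ, βb ≤ s → 0 ≤ Qfun N m f s) ∧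
    (∃ θ : ℝ, θ ∈ Set.Ioo (0:ℝ) 1 ∧
      Filter.Tendsto (fun s : ℝ =>
        sInf ((fun p : ℝ × ℝ =>
          Qfun N m f p.2 * ((|s| ^ (m - 2) * s) / f p.1) ^ (N / m)) ''
            (Set.Icc (θ * s) s ×ˢ Set.Icc (θ * s) s)))
        Filter.atTop Filter.atTop)) ∧
  (γm = ⊥ →
    (∃ βb : ℝ, -βb < βm ∧ ∀ s : ℝ, s ≤ -βb → 0 ≤ Qfun N m f s) ∧
    (∃ θ : ℝ, θ ∈ Set.Ioo (0:ℝ) 1 ∧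
      Filter.Tendsto (fun s : ℝ =>
        sInf ((fun p : ℝ × ℝ =>
          Qfun N m f p.2 * ((|s| ^ (m - 2) * s) / f p.1) ^ (N / m)) ''
            (Set.Icc s (θ * s) ×ˢ Set.Icc s (θ * s))))
        Filter.atBot Filter.atTop))

/-- Assumption (f₄). -/
def Hf4 (N m : ℝ) (f : ℝ → ℝ) (βm βp : ℝ) (γm γp : EReal) : Prop :=
  (γp ≠ ⊤ → ∃ L₀ : ℝ, 0 < L₀ ∧ ∃ βb : ℝ, βp < βb ∧
    ∀ s : ℝ, βb ≤ s → (s : EReal) < γp → f s ≤ L₀ * (γp.toReal - s) ^ (m - 1)) ∧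
  (γm ≠ ⊥ → ∃ L₀ : ℝ, 0 < L₀ ∧ ∃ βb : ℝ, -βm < βb ∧
    ∀ s : ℝ, γm < (s : EReal) → s ≤ -βb → -f s ≤ L₀ * (s - γm.toReal) ^ (m - 1))

open Real

lemma phim_of_nonneg {m x : ℝ} (hm : 1 < m) (hx : 0 ≤ x) : phim m x = x ^ (m - 1) := by
  rcases hx.eq_or_lt with rfl | hx
  · simp [phim, zero_rpow (by linarith : m - 1 ≠ 0)]
  · rw [phim, abs_of_pos hx, ← rpow_add_one hx.ne']
    ring_nf

lemma le_rpow_inv_mul_of_rpow_le_mul_rpow {x y c p : ℝ} (hx : 0 ≤ x) (hy : 0 ≤ y) (hc : 0 ≤ c)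
    (hp : 0 < p) (h : x ^ p ≤ c * y ^ p) : x ≤ c ^ p⁻¹ * y :=
  calc x = (x ^ p) ^ p⁻¹ := (rpow_rpow_inv hx hp.ne').symm
    _ ≤ (c * y ^ p) ^ p⁻¹ := rpow_le_rpow (by positivity) h (inv_nonneg.2 hp.le)
    _ = c ^ p⁻¹ * y := by rw [mul_rpow hc (rpow_nonneg hy _), rpow_rpow_inv hy hp.ne']

lemma le_mul_exp_of_hasDerivWithinAt_le_mul {v v' : ℝ → ℝ} {K a b : ℝ}
    (hv : ∀ x ∈ Icc a b, HasDerivWithinAt v (v' x) (Icc a b) x)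
    (bound : ∀ x ∈ Ico a b, v' x ≤ K * v x) :
    ∀ x ∈ Icc a b, v x ≤ v a * exp (K * (x - a)) := by
  intro x hx
  rw [← gronwallBound_ε0]
  refine le_gronwallBound_of_liminf_deriv_right_le (f' := v')
    (fun y hy => (hv y hy).continuousWithinAt) (fun y hy r hr => ?_) le_rfl
    (by simpa using bound) x hx
  simpa only [slope_def_module, smul_eq_mul] using
    ((hv y (Ico_subset_Icc_self hy)).mono_of_mem_nhdsWithin
      (Icc_mem_nhdsGE_of_mem hy)).liminf_right_slope_le hr

namespace IsSolutionOn

variable {N m L₀ γ T s : ℝ} {f u u' : ℝ → ℝ}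

theorem hasDerivWithinAt_flux {J : Set ℝ} (hu : IsSolutionOn N m f J u u') {r : ℝ}
    (hr : r ∈ J ∩ Ioi 0) :
    HasDerivWithinAt (fun t => t ^ (N - 1) * phim m (u' t)) (-(r ^ (N - 1) * f (u r)))
      (J ∩ Ioi 0) r := by
  obtain ⟨-, -, w', hw', -, heq⟩ := hu
  have hr0 : r ≠ 0 := (mem_Ioi.1 hr.2).ne'
  refine (((hasDerivAt_rpow_const (p := N - 1) (Or.inl hr0)).hasDerivWithinAt).mul
    (hw' r hr)).congr_deriv ?_
  rw [rpow_sub_one hr0]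
  linear_combination r ^ (N - 1) * heq r hr

theorem rpow_mul_phim_le (hu : IsSolutionOn N m f (Icc T s) u u') (hT : 0 < T) (hN : 0 < N)
    (hm : 1 ≤ m) (hL₀ : 0 ≤ L₀) (hT0 : u' T = 0) (hpos : ∀ r ∈ Icc T s, 0 ≤ u' r)
    (hγ : ∀ r ∈ Icc T s, γ < u r) (hf : ∀ r ∈ Icc T s, -f (u r) ≤ L₀ * (u r - γ) ^ (m - 1)) :
    ∀ r ∈ Icc T s, r ^ (N - 1) * phim m (u' r) ≤ L₀ / N * (u r - γ) ^ (m - 1) * r ^ N := by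
  have hJ : Icc T s ∩ Ioi 0 = Icc T s := inter_eq_left.2 fun x hx => hT.trans_le hx.1
  have hflux : ∀ r ∈ Icc T s, HasDerivWithinAt (fun t => t ^ (N - 1) * phim m (u' t))
      (-(r ^ (N - 1) * f (u r))) (Icc T s) r := fun r hr =>
    hJ ▸ hu.hasDerivWithinAt_flux (hJ.symm ▸ hr)
  have hsuper : ∀ r ∈ Icc T s, HasDerivWithinAt (fun t => L₀ / N * (u t - γ) ^ (m - 1) * t ^ N)
      (L₀ / N * (u' r * (m - 1) * (u r - γ) ^ (m - 1 - 1)) * r ^ N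
        + L₀ / N * (u r - γ) ^ (m - 1) * (N * r ^ (N - 1))) (Icc T s) r := fun r hr =>
    ((((hu.1 r hr).sub_const γ).rpow_const (Or.inl (sub_pos.2 (hγ r hr)).ne')).const_mul _).mul
      (hasDerivAt_rpow_const (Or.inl (hT.trans_le hr.1).ne')).hasDerivWithinAt
  have hright {g g' : ℝ → ℝ} (hg : ∀ r ∈ Icc T s, HasDerivWithinAt g (g' r) (Icc T s) r) :
      ∀ r ∈ Ico T s, HasDerivWithinAt g (g' r) (Ici r) r := fun r hr =>
    (hg r (Ico_subset_Icc_self hr)).mono_of_mem_nhdsWithin (Icc_mem_nhdsGE_of_mem hr)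
  intro r hr
  have hv (x : ℝ) (hx : x ∈ Icc T s) : 0 ≤ u x - γ := (sub_pos.2 (hγ x hx)).le
  have hx0 (x : ℝ) (hx : x ∈ Icc T s) : 0 ≤ x := hT.le.trans hx.1
  refine image_le_of_deriv_right_le_deriv_boundary (fun r hr => (hflux r hr).continuousWithinAt)
    (hright hflux) ?_ (fun r hr => (hsuper r hr).continuousWithinAt) (hright hsuper) ?_ hr
  · have hT_mem : T ∈ Icc T s := left_mem_Icc.2 (hr.1.trans hr.2)
    simp only [hT0, phim, mul_zero]
    exact mul_nonneg (mul_nonneg (div_nonneg hL₀ hN.le) (rpow_nonneg (hv T hT_mem) _))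
      (rpow_nonneg hT.le _)
  · intro x hx
    replace hx := Ico_subset_Icc_self hx
    have hchain : 0 ≤ L₀ / N * (u' x * (m - 1) * (u x - γ) ^ (m - 1 - 1)) * x ^ N :=
      mul_nonneg (mul_nonneg (div_nonneg hL₀ hN.le) (mul_nonneg (mul_nonneg (hpos x hx)
        (sub_nonneg.2 hm)) (rpow_nonneg (hv x hx) _))) (rpow_nonneg (hx0 x hx) _)
    have hflux_le : -(x ^ (N - 1) * f (u x)) ≤ x ^ (N - 1) * (L₀ * (u x - γ) ^ (m - 1)) := by
      rw [← mul_neg]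
      exact mul_le_mul_of_nonneg_left (hf x hx) (rpow_nonneg (hx0 x hx) _)
    have hsplit : L₀ / N * (u x - γ) ^ (m - 1) * (N * x ^ (N - 1))
        = x ^ (N - 1) * (L₀ * (u x - γ) ^ (m - 1)) := by
      field_simp
    linarith

theorem le_rpow_mul_sub (hu : IsSolutionOn N m f (Icc T s) u u') (hT : 0 < T) (hN : 0 < N)
    (hm : 1 < m) (hL₀ : 0 ≤ L₀) (hT0 : u' T = 0) (hpos : ∀ r ∈ Icc T s, 0 ≤ u' r)
    (hγ : ∀ r ∈ Icc T s, γ < u r) (hf : ∀ r ∈ Icc T s, -f (u r) ≤ L₀ * (u r - γ) ^ (m - 1)) :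
    ∀ r ∈ Icc T s, u' r ≤ (L₀ / N) ^ (1 / (m - 1)) * r ^ (1 / (m - 1)) * (u r - γ) := by
  intro r hr
  have hr0 : 0 < r := hT.trans_le hr.1
  have hflux := hu.rpow_mul_phim_le hT hN hm.le hL₀ hT0 hpos hγ hf r hr
  rw [phim_of_nonneg hm (hpos r hr)] at hflux
  have hpow : u' r ^ (m - 1) ≤ L₀ / N * r * (u r - γ) ^ (m - 1) := by
    have hrN : r ^ N = r ^ (N - 1) * r := by rw [rpow_sub_one hr0.ne', div_mul_cancel₀ _ hr0.ne']
    rw [hrN] at hflux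
    exact le_of_mul_le_mul_left (hflux.trans_eq (by ring)) (rpow_pos_of_pos hr0 (N - 1))
  calc u' r ≤ (L₀ / N * r) ^ (m - 1)⁻¹ * (u r - γ) :=
        le_rpow_inv_mul_of_rpow_le_mul_rpow (hpos r hr) (sub_pos.2 (hγ r hr)).le
          (by positivity) (sub_pos.2 hm) hpow
    _ = (L₀ / N) ^ (1 / (m - 1)) * r ^ (1 / (m - 1)) * (u r - γ) := by
        rw [mul_rpow (div_nonneg hL₀ hN.le) hr0.le, one_div]

end IsSolutionOn

theorem gronwall_derivative_bound_general
    (N m : ℝ) (hm : 1 < m) (hNm : m ≤ N) (f : ℝ → ℝ)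
    (γm βb L₀ : ℝ) (hL₀ : 0 < L₀)
    (hfb : ∀ s : ℝ, γm < s → s ≤ -βb → -f s ≤ L₀ * (s - γm) ^ (m - 1))
    (T ss : ℝ) (hT : 0 < T)
    (u u' : ℝ → ℝ) (hu : IsSolutionOn N m f (Set.Icc T ss) u u')
    (hT0 : u' T = 0) (hpos : ∀ r ∈ Set.Icc T ss, 0 ≤ u' r)
    (hrange : ∀ r ∈ Set.Icc T ss, γm < u r ∧ u r ≤ -βb) :
    ∀ r ∈ Set.Icc T ss, 0 ≤ u' r ∧
      u' r ≤ (L₀ / N) ^ (1 / (m - 1)) * ss ^ (1 / (m - 1)) * (u T - γm) *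
        Real.exp ((L₀ / N) ^ (1 / (m - 1)) * ss ^ (m / (m - 1))) := by
  intro r hr
  have hN : 0 < N := by linarith
  have hss : 0 < ss := hT.trans_le (hr.1.trans hr.2)
  have hv (x : ℝ) (hx : x ∈ Icc T ss) : 0 ≤ u x - γm := (sub_pos.2 (hrange x hx).1).le
  have hvT := hv T (left_mem_Icc.2 (hr.1.trans hr.2))
  set C := (L₀ / N) ^ (1 / (m - 1))
  set K := C * ss ^ (1 / (m - 1))
  have hC : 0 ≤ C := rpow_nonneg (div_nonneg hL₀.le hN.le) _
  have hK : 0 ≤ K := mul_nonneg hC (rpow_nonneg hss.le _)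
  have hlin (x : ℝ) (hx : x ∈ Icc T ss) : u' x ≤ K * (u x - γm) :=
    (hu.le_rpow_mul_sub hT hN hm hL₀.le hT0 hpos (fun x hx => (hrange x hx).1)
      (fun x hx => hfb _ (hrange x hx).1 (hrange x hx).2) x hx).trans <|
    mul_le_mul_of_nonneg_right (mul_le_mul_of_nonneg_left
      (rpow_le_rpow (hT.le.trans hx.1) hx.2 (one_div_nonneg.2 (sub_nonneg.2 hm.le))) hC) (hv x hx)
  have hgron := le_mul_exp_of_hasDerivWithinAt_le_mul (v := fun x => u x - γm)
    (fun x hx => (hu.1 x hx).sub_const γm) (fun x hx => hlin x (Ico_subset_Icc_self hx)) r hr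
  have hKss : K * ss = C * ss ^ (m / (m - 1)) := by
    have hm1 : m - 1 ≠ 0 := (sub_pos.2 hm).ne'
    rw [show m / (m - 1) = 1 / (m - 1) + 1 by field_simp; ring, rpow_add_one hss.ne']
    ring
  refine ⟨hpos r hr, ?_⟩
  calc u' r ≤ K * (u r - γm) := hlin r hr
    _ ≤ K * ((u T - γm) * exp (K * (r - T))) := by gcongr
    _ ≤ K * ((u T - γm) * exp (K * ss)) := by gcongr; linarith [hr.2]
    _ = C * ss ^ (1 / (m - 1)) * (u T - γm) * exp (C * ss ^ (m / (m - 1))) := by rw [hKss]; ring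

/-- Gronwall-type a priori bound for `u'` while `u` stays in
`(γ⁻, -β̄]` under the growth bound (f₄)(b). -/
theorem gronwall_derivative_bound
    (N m : ℝ) (hm : 1 < m) (hNm : m ≤ N) (f : ℝ → ℝ) (hf : Continuous f)
    (γm βb L₀ : ℝ) (hβb : 0 < βb) (hγ : γm < -βb) (hL₀ : 0 < L₀)
    (hfb : ∀ s : ℝ, γm < s → s ≤ -βb → -f s ≤ L₀ * (s - γm) ^ (m - 1))
    (T ss : ℝ) (hT : 0 < T) (hTs : T < ss)
    (u u' : ℝ → ℝ) (hu : IsSolutionOn N m f (Set.Icc T ss) u u')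
    (hT0 : u' T = 0) (hpos : ∀ r ∈ Set.Icc T ss, 0 ≤ u' r)
    (hrange : ∀ r ∈ Set.Icc T ss, γm < u r ∧ u r ≤ -βb) :
    ∀ r ∈ Set.Icc T ss, 0 ≤ u' r ∧
      u' r ≤ (L₀ / N) ^ (1 / (m - 1)) * ss ^ (1 / (m - 1)) * (u T - γm) *
        Real.exp ((L₀ / N) ^ (1 / (m - 1)) * ss ^ (m / (m - 1))) :=
  gronwall_derivative_bound_general N m hm hNm f γm βb L₀ hL₀ hfb T ss hT u u' hu hT0 hpos hrange
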